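/- At the unique minimizer x* of x ↦ Σ_k c_k |x_{(k)}| + (1/2)‖x − w‖² (with c non-negative non-increasing), each coordinate satisfies sign(x*_i) ∈ {0, sign(w_i)} and |x*_i| ≤ |w_i|; i.e., the proximal operator of Ω shrinks each coordinate towards zero without changing its sign. -/

import Mathlib

/-!
`Ω` depends on `x` only through the sorted vector of absolute values, and by the rearrangement
inequality (the weights `c` being non-increasing) it is the largest of the sums
`∑ k, c k * |x (σ k)|` over permutations `σ`; as `c ≥ 0`, it is therefore monotone in each `|x_j|`.
The quadratic term is separable, so replacing `x*_i` by any `t` with `|t| ≤ |x*_i|` does not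
increase `Ω` and changes only the `i`-th square: hence `(x*_i - w_i)² ≤ (t - w_i)²` for all such
`t`. The choice `t = w_i` gives `|x*_i| ≤ |w_i|`, and `t = -x*_i` gives `0 ≤ x*_i w_i`.
-/

open Finset

/-- The `(k+1)`-th largest absolute value among the entries of `x`. -/
noncomputable def sortedAbs {m : ℕ} (x : Fin m → ℝ) : Fin m → ℝ :=
  fun k => |x (Tuple.sort (fun i => -|x i|) k)|

/-- The submodular-relaxation regularizer `Ω(x) = ∑ k c k * |x_{(k)}|`. -/
noncomputable def omegaReg {m : ℕ} (c : ℕ → ℝ) (x : Fin m → ℝ) : ℝ :=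
  ∑ k : Fin m, c k * sortedAbs x k

section omegaReg

variable {m : ℕ} {c : ℕ → ℝ}

theorem sortedAbs_antitone (x : Fin m → ℝ) : Antitone (sortedAbs x) := fun _ _ hab =>
  neg_le_neg_iff.mp (Tuple.monotone_sort (fun i => -|x i|) hab)

theorem sum_mul_abs_comp_perm_le_omegaReg (hc : Antitone c) (x : Fin m → ℝ)
    (σ : Equiv.Perm (Fin m)) : ∑ k : Fin m, c k * |x (σ k)| ≤ omegaReg c x := by
  set τ := Tuple.sort (fun i => -|x i|)
  have hmv : Monovary (fun k : Fin m => c k) (sortedAbs x) :=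
    (hc.comp_monotone Fin.val_strictMono.monotone).monovary (sortedAbs_antitone x)
  calc ∑ k : Fin m, c k * |x (σ k)| = ∑ k : Fin m, c k * sortedAbs x ((τ⁻¹ * σ) k) := by
        simp [sortedAbs, τ]
    _ ≤ omegaReg c x := hmv.sum_mul_comp_perm_le_sum_mul

theorem omegaReg_le_of_abs_le (hc : Antitone c) (hc₀ : ∀ k, 0 ≤ c k) {x y : Fin m → ℝ}
    (h : ∀ j, |y j| ≤ |x j|) : omegaReg c y ≤ omegaReg c x :=
  calc omegaReg c y ≤ ∑ k : Fin m, c k * |x (Tuple.sort (fun i => -|y i|) k)| :=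
        sum_le_sum fun _ _ => mul_le_mul_of_nonneg_left (h _) (hc₀ _)
    _ ≤ omegaReg c x := sum_mul_abs_comp_perm_le_omegaReg hc x _

end omegaReg

theorem sq_sub_le_of_update_le {ι : Type*} [Fintype ι] [DecidableEq ι] {f : (ι → ℝ) → ℝ}
    {w x : ι → ℝ}
    (hmin : ∀ y, f x + (1 / 2) * ∑ j, (x j - w j) ^ 2 ≤ f y + (1 / 2) * ∑ j, (y j - w j) ^ 2)
    {i : ι} {t : ℝ} (hf : f (Function.update x i t) ≤ f x) :
    (x i - w i) ^ 2 ≤ (t - w i) ^ 2 := by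
  have hsplit : ∀ y : ι → ℝ,
      ∑ j, (y j - w j) ^ 2 = (y i - w i) ^ 2 + ∑ j ∈ univ.erase i, (y j - w j) ^ 2 :=
    fun y => (add_sum_erase _ _ (mem_univ i)).symm
  have hrest : ∑ j ∈ univ.erase i, (Function.update x i t j - w j) ^ 2 =
      ∑ j ∈ univ.erase i, (x j - w j) ^ 2 :=
    sum_congr rfl fun j hj => by rw [Function.update_of_ne (ne_of_mem_erase hj)]
  have := hmin (Function.update x i t)
  rw [hsplit, hsplit, hrest, Function.update_self] at this
  linarith

theorem sign_eq_zero_or_eq_sign_of_mul_nonneg {x w : ℝ} (hxw : 0 ≤ x * w) (habs : |x| ≤ |w|) :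
    Real.sign x = 0 ∨ Real.sign x = Real.sign w := by
  by_cases hx : x = 0
  · exact Or.inl (by simp [hx])
  have hw : w ≠ 0 := by
    rintro rfl
    exact hx (abs_nonpos_iff.mp (by simpa using habs))
  have hpos : 0 < x * w := hxw.lt_of_ne (mul_ne_zero hx hw).symm
  rcases lt_or_gt_of_ne hx with hx | hx
  · rw [Real.sign_of_neg hx, Real.sign_of_neg (neg_of_mul_pos_right hpos hx.le)]
    exact Or.inr rfl
  · rw [Real.sign_of_pos hx, Real.sign_of_pos (pos_of_mul_pos_right hpos hx.le)]
    exact Or.inr rfl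

theorem abs_le_abs_and_sign_of_forall_sq_sub_le {x w : ℝ}
    (h : ∀ t, |t| ≤ |x| → (x - w) ^ 2 ≤ (t - w) ^ 2) :
    |x| ≤ |w| ∧ (Real.sign x = 0 ∨ Real.sign x = Real.sign w) := by
  have habs : |x| ≤ |w| := by
    by_contra! hlt
    have hxw : x = w := by nlinarith [h w hlt.le]
    exact hlt.ne' (by rw [hxw])
  have hmul : 0 ≤ x * w := by nlinarith [h (-x) (abs_neg x).le]
  exact ⟨habs, sign_eq_zero_or_eq_sign_of_mul_nonneg hmul habs⟩

/-- at the minimizer `x*` of `Ω(x) + (1/2)‖x − w‖²`, every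
coordinate is shrunk towards zero without changing sign:
`|x*_i| ≤ |w_i|` and `sign(x*_i) ∈ {0, sign(w_i)}`. -/
theorem prox_shrinks_towards_zero (m : ℕ) (c : ℕ → ℝ) (w : Fin m → ℝ)
    (hnonneg : ∀ k, 0 ≤ c k)
    (hanti : ∀ k, c (k + 1) ≤ c k)
    (xstar : Fin m → ℝ)
    (hmin : ∀ y : Fin m → ℝ,
      omegaReg c xstar + (1 / 2) * ∑ i, (xstar i - w i) ^ 2 ≤
        omegaReg c y + (1 / 2) * ∑ i, (y i - w i) ^ 2) :
    ∀ i : Fin m, |xstar i| ≤ |w i| ∧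
      (Real.sign (xstar i) = 0 ∨ Real.sign (xstar i) = Real.sign (w i)) := by
  intro i
  refine abs_le_abs_and_sign_of_forall_sq_sub_le fun t ht => sq_sub_le_of_update_le hmin ?_
  refine omegaReg_le_of_abs_le (antitone_nat_of_succ_le hanti) hnonneg fun j => ?_
  rcases eq_or_ne j i with rfl | hji
  · rwa [Function.update_self]
  · rw [Function.update_of_ne hji]
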